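/- arXiv:2501.13089 — 7 statements merged into one kernel-verified Lean document; each statement's English description precedes it below -/
import Mathlib

section
/- For every real eccentricity e with 0 ≤ e < 1 and all real constants A and B, the integral over one period of the eccentric anomaly satisfies ∫₀^{2π} [A·(cos E − e) + B·sin E] / (1 − e·cos E)² dE = 0. -/
open Real intervalIntegral

/-! The integrand is the derivative of the `2π`-periodic function
`(A sin E − B cos E) / (1 − e cos E)`, so its integral over a period vanishes. -/

lemma one_sub_mul_cos_pos {e : ℝ} (he : |e| < 1) (x : ℝ) : 0 < 1 - e * cos x := by
  have : |e * cos x| < 1 := by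
    rw [abs_mul]
    exact lt_of_le_of_lt (mul_le_of_le_one_right (abs_nonneg e) (abs_cos_le_one x)) he
  linarith [le_abs_self (e * cos x)]

lemma hasDerivAt_sin_sub_cos_div_one_sub_mul_cos (e A B : ℝ) {x : ℝ}
    (hx : 1 - e * cos x ≠ 0) :
    HasDerivAt (fun E => (A * sin E - B * cos E) / (1 - e * cos E))
      ((A * (cos x - e) + B * sin x) / (1 - e * cos x) ^ 2) x := by
  have hnum : HasDerivAt (fun E => A * sin E - B * cos E) (A * cos x + B * sin x) x := by
    simpa using ((hasDerivAt_sin x).const_mul A).fun_sub ((hasDerivAt_cos x).const_mul B)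
  have hden : HasDerivAt (fun E => 1 - e * cos E) (e * sin x) x := by
    simpa using ((hasDerivAt_cos x).const_mul e).const_sub 1
  refine (hnum.div hden hx).congr_deriv ?_
  congr 1
  linear_combination (-A * e) * sin_sq_add_cos_sq x

/-- For `0 ≤ e < 1` and any real constants `A, B`, the integral over one
period of the eccentric anomaly of `[A(cos E − e) + B sin E]/(1 − e cos E)²` vanishes. -/
theorem integral_first_order_term_vanishes (e A B : ℝ) (he0 : 0 ≤ e) (he1 : e < 1) :
    ∫ E in (0 : ℝ)..(2 * Real.pi),
      (A * (Real.cos E - e) + B * Real.sin E) / (1 - e * Real.cos E) ^ 2 = 0 := by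
  have hpos := one_sub_mul_cos_pos (abs_lt.2 ⟨by linarith, he1⟩)
  have hderiv x := hasDerivAt_sin_sub_cos_div_one_sub_mul_cos e A B (hpos x).ne'
  have hcont : Continuous fun E =>
      (A * (cos E - e) + B * sin E) / (1 - e * cos E) ^ 2 :=
    Continuous.div (by fun_prop) (by fun_prop) fun x => pow_ne_zero 2 (hpos x).ne'
  rw [integral_eq_sub_of_hasDerivAt (fun x _ => hderiv x) (hcont.intervalIntegrable _ _)]
  simp
end

section
/- Let L > 0 and consider the open set D = {(Q,P) ∈ ℝ² : P² + Q² < 2L}. Define on D the smooth functions x1(Q,P) = −P·R, x2(Q,P) = Q·R, x3(Q,P) = L − (P² + Q²), where R = √(2L − P² − Q²). Then, with the canonical Poisson bracket {f,g} = (∂f/∂Q)(∂g/∂P) − (∂f/∂P)(∂g/∂Q), the following relations hold identically on D: {x1, x2} = 2 x3, {x2, x3} = 2 x1, and {x3, x1} = 2 x2. -/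
/-!
With `R = √(2L − P² − Q²)`, every partial derivative of `x1, x2, x3` is a rational expression
in `P, Q, R`. After clearing the denominator `R`, the relations `{x2,x3} = 2x1` and
`{x3,x1} = 2x2` are polynomial identities, and `{x1,x2} = 2x3` follows from `R² = 2L − P² − Q²`,
which is where `P² + Q² < 2L` enters.
-/

open Real

/-- Canonical Poisson bracket in the plane:
`{f,g} = (∂f/∂Q)(∂g/∂P) − (∂f/∂P)(∂g/∂Q)`. -/
noncomputable def poissonBracket (f g : ℝ → ℝ → ℝ) (Q P : ℝ) : ℝ :=
  deriv (fun Q' => f Q' P) Q * deriv (fun P' => g Q P') P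
    - deriv (fun P' => f Q P') P * deriv (fun Q' => g Q' P) Q

/-- First invariant `x1 = −P·√(2L − P² − Q²)` (as a function of `(Q,P)`). -/
noncomputable def x1 (L Q P : ℝ) : ℝ := -P * Real.sqrt (2 * L - P ^ 2 - Q ^ 2)

/-- Second invariant `x2 = Q·√(2L − P² − Q²)`. -/
noncomputable def x2 (L Q P : ℝ) : ℝ := Q * Real.sqrt (2 * L - P ^ 2 - Q ^ 2)

/-- Third invariant `x3 = L − (P² + Q²)`. -/
noncomputable def x3 (L Q P : ℝ) : ℝ := L - (P ^ 2 + Q ^ 2)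

theorem poissonBracket_eq_of_hasDerivAt {f g : ℝ → ℝ → ℝ} {Q P fQ fP gQ gP : ℝ}
    (hfQ : HasDerivAt (fun Q' => f Q' P) fQ Q) (hfP : HasDerivAt (fun P' => f Q P') fP P)
    (hgQ : HasDerivAt (fun Q' => g Q' P) gQ Q) (hgP : HasDerivAt (fun P' => g Q P') gP P) :
    poissonBracket f g Q P = fQ * gP - fP * gQ := by
  rw [poissonBracket, hfQ.deriv, hfP.deriv, hgQ.deriv, hgP.deriv]

theorem hasDerivAt_sqrt_sub_sq {c t : ℝ} (h : c - t ^ 2 ≠ 0) :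
    HasDerivAt (fun s => √(c - s ^ 2)) (-t / √(c - t ^ 2)) t := by
  have hsq : HasDerivAt (fun s => c - s ^ 2) (-(2 * t)) t := by
    simpa using (hasDerivAt_pow 2 t).const_sub c
  refine (hsq.sqrt h).congr_deriv ?_
  field_simp

section PartialDerivatives

variable {L Q P : ℝ}

theorem hasDerivAt_sqrt_P (h : 2 * L - P ^ 2 - Q ^ 2 ≠ 0) :
    HasDerivAt (fun P' => √(2 * L - P' ^ 2 - Q ^ 2)) (-P / √(2 * L - P ^ 2 - Q ^ 2)) P := by
  simp_rw [sub_right_comm (2 * L) _ (Q ^ 2)] at h ⊢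
  exact hasDerivAt_sqrt_sub_sq h

theorem hasDerivAt_x1_Q (h : 2 * L - P ^ 2 - Q ^ 2 ≠ 0) :
    HasDerivAt (fun Q' => x1 L Q' P) (-P * (-Q / √(2 * L - P ^ 2 - Q ^ 2))) Q :=
  (hasDerivAt_sqrt_sub_sq h).const_mul (-P)

theorem hasDerivAt_x1_P (h : 2 * L - P ^ 2 - Q ^ 2 ≠ 0) :
    HasDerivAt (fun P' => x1 L Q P')
      (-1 * √(2 * L - P ^ 2 - Q ^ 2) + -P * (-P / √(2 * L - P ^ 2 - Q ^ 2))) P :=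
  (hasDerivAt_id P).neg.mul (hasDerivAt_sqrt_P h)

theorem hasDerivAt_x2_Q (h : 2 * L - P ^ 2 - Q ^ 2 ≠ 0) :
    HasDerivAt (fun Q' => x2 L Q' P)
      (1 * √(2 * L - P ^ 2 - Q ^ 2) + Q * (-Q / √(2 * L - P ^ 2 - Q ^ 2))) Q :=
  (hasDerivAt_id Q).mul (hasDerivAt_sqrt_sub_sq h)

theorem hasDerivAt_x2_P (h : 2 * L - P ^ 2 - Q ^ 2 ≠ 0) :
    HasDerivAt (fun P' => x2 L Q P') (Q * (-P / √(2 * L - P ^ 2 - Q ^ 2))) P :=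
  (hasDerivAt_sqrt_P h).const_mul Q

theorem hasDerivAt_x3_Q : HasDerivAt (fun Q' => x3 L Q' P) (-(2 * Q)) Q := by
  simpa [x3] using ((hasDerivAt_pow 2 Q).const_add (P ^ 2)).const_sub L

theorem hasDerivAt_x3_P : HasDerivAt (fun P' => x3 L Q P') (-(2 * P)) P := by
  simpa [x3] using ((hasDerivAt_pow 2 P).add_const (Q ^ 2)).const_sub L

end PartialDerivatives

theorem chart_is_canonical_so3_relations_general (L : ℝ)
    (Q P : ℝ) (h : P ^ 2 + Q ^ 2 < 2 * L) :
    poissonBracket (x1 L) (x2 L) Q P = 2 * x3 L Q P ∧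
    poissonBracket (x2 L) (x3 L) Q P = 2 * x1 L Q P ∧
    poissonBracket (x3 L) (x1 L) Q P = 2 * x2 L Q P := by
  have hr : 0 < 2 * L - P ^ 2 - Q ^ 2 := by linarith
  rw [poissonBracket_eq_of_hasDerivAt (hasDerivAt_x1_Q hr.ne') (hasDerivAt_x1_P hr.ne')
      (hasDerivAt_x2_Q hr.ne') (hasDerivAt_x2_P hr.ne'),
    poissonBracket_eq_of_hasDerivAt (hasDerivAt_x2_Q hr.ne') (hasDerivAt_x2_P hr.ne')
      hasDerivAt_x3_Q hasDerivAt_x3_P,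
    poissonBracket_eq_of_hasDerivAt hasDerivAt_x3_Q hasDerivAt_x3_P
      (hasDerivAt_x1_Q hr.ne') (hasDerivAt_x1_P hr.ne')]
  unfold x1 x2 x3
  set R := √(2 * L - P ^ 2 - Q ^ 2)
  have hR : R ≠ 0 := (sqrt_pos.mpr hr).ne'
  have hR2 : R ^ 2 = 2 * L - P ^ 2 - Q ^ 2 := sq_sqrt hr.le
  refine ⟨?_, ?_, ?_⟩ <;> field_simp
  · linear_combination R ^ 2 * hR2
  · ring
  · ring

/-- On the open disk `P² + Q² < 2L`, the local chart is canonical: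
the invariants satisfy the `so(3)` Poisson relations
`{x1,x2} = 2x3`, `{x2,x3} = 2x1`, `{x3,x1} = 2x2`. -/
theorem chart_is_canonical_so3_relations (L : ℝ) (hL : 0 < L)
    (Q P : ℝ) (h : P ^ 2 + Q ^ 2 < 2 * L) :
    poissonBracket (x1 L) (x2 L) Q P = 2 * x3 L Q P ∧
    poissonBracket (x2 L) (x3 L) Q P = 2 * x1 L Q P ∧
    poissonBracket (x3 L) (x1 L) Q P = 2 * x2 L Q P :=
  chart_is_canonical_so3_relations_general L Q P h
end

section
/- For every L > 0 and all I₁, I₂ ∈ ℝ, the real 6×4 matrix M with rows: (1/L³, −3/L⁴, 0, 0); (2/L⁷, −14/L⁸, 0, 0); (−1/L⁷, 7/L⁸, 0, 0); (√(5/3)/(2L⁷), −7√(5/3)/(2L⁸), 0, 0); (−2(6I₁ − √15 I₂)/(3L⁸), 16(6I₁ − √15 I₂)/(3L⁹), −4/L⁸, 2√(5/3)/L⁸); (2(√15 I₁ − I₂)/(3L⁸), 16(I₂ − √15 I₁)/(3L⁹), 2√(5/3)/L⁸, −2/(3L⁸)) has rank exactly 4. -/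
open Real Matrix

lemma rank_row_submatrix_le' (f : Fin 4 → Fin 6) (A : Matrix (Fin 6) (Fin 4) ℝ) :
    (A.submatrix f id).rank ≤ A.rank := by
  have h : (A.submatrix f id).mulVecLin = (LinearMap.funLeft ℝ ℝ f).comp A.mulVecLin := by
    ext v i
    simp [Matrix.mulVecLin_apply, Matrix.mulVec, Matrix.submatrix_apply, dotProduct,
      Pi.single_apply, mul_comm]
  rw [Matrix.rank, Matrix.rank, h, LinearMap.range_comp]
  exact Submodule.finrank_map_le _ _

/-- The frequency matrix `M_Ω(L,I₁,I₂)` around the circular equatorial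
equilibria `E₁,₂` has rank exactly 4 (Han–Li–Yi nondegeneracy). -/
theorem frequency_matrix_equatorial_rank (L I₁ I₂ : ℝ) (hL : 0 < L) :
    (!![1 / L ^ 3, -3 / L ^ 4, 0, 0;
        2 / L ^ 7, -14 / L ^ 8, 0, 0;
        -1 / L ^ 7, 7 / L ^ 8, 0, 0;
        Real.sqrt (5 / 3) / (2 * L ^ 7), -7 * Real.sqrt (5 / 3) / (2 * L ^ 8), 0, 0;
        -2 * (6 * I₁ - Real.sqrt 15 * I₂) / (3 * L ^ 8),
          16 * (6 * I₁ - Real.sqrt 15 * I₂) / (3 * L ^ 9), -4 / L ^ 8,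
          2 * Real.sqrt (5 / 3) / L ^ 8;
        2 * (Real.sqrt 15 * I₁ - I₂) / (3 * L ^ 8),
          16 * (I₂ - Real.sqrt 15 * I₁) / (3 * L ^ 9), 2 * Real.sqrt (5 / 3) / L ^ 8,
          -2 / (3 * L ^ 8)] : Matrix (Fin 6) (Fin 4) ℝ).rank = 4 := by
  set A : Matrix (Fin 6) (Fin 4) ℝ := !![1 / L ^ 3, -3 / L ^ 4, 0, 0;
        2 / L ^ 7, -14 / L ^ 8, 0, 0;
        -1 / L ^ 7, 7 / L ^ 8, 0, 0;
        Real.sqrt (5 / 3) / (2 * L ^ 7), -7 * Real.sqrt (5 / 3) / (2 * L ^ 8), 0, 0;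
        -2 * (6 * I₁ - Real.sqrt 15 * I₂) / (3 * L ^ 8),
          16 * (6 * I₁ - Real.sqrt 15 * I₂) / (3 * L ^ 9), -4 / L ^ 8,
          2 * Real.sqrt (5 / 3) / L ^ 8;
        2 * (Real.sqrt 15 * I₁ - I₂) / (3 * L ^ 8),
          16 * (I₂ - Real.sqrt 15 * I₁) / (3 * L ^ 9), 2 * Real.sqrt (5 / 3) / L ^ 8,
          -2 / (3 * L ^ 8)] with hA
  have hL0 : L ≠ 0 := hL.ne'
  set B : Matrix (Fin 4) (Fin 4) ℝ := A.submatrix ![0, 1, 4, 5] id with hB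
  have hBC : B = !![1 / L ^ 3, -3 / L ^ 4, 0, 0;
        2 / L ^ 7, -14 / L ^ 8, 0, 0;
        -2 * (6 * I₁ - Real.sqrt 15 * I₂) / (3 * L ^ 8),
          16 * (6 * I₁ - Real.sqrt 15 * I₂) / (3 * L ^ 9), -4 / L ^ 8,
          2 * Real.sqrt (5 / 3) / L ^ 8;
        2 * (Real.sqrt 15 * I₁ - I₂) / (3 * L ^ 8),
          16 * (I₂ - Real.sqrt 15 * I₁) / (3 * L ^ 9), 2 * Real.sqrt (5 / 3) / L ^ 8,
          -2 / (3 * L ^ 8)] := by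
    ext i j
    fin_cases i <;> fin_cases j <;> rfl
  have hdet : B.det = 32 / L ^ 27 := by
    have hs : Real.sqrt (5 / 3) * Real.sqrt (5 / 3) = 5 / 3 :=
      Real.mul_self_sqrt (by norm_num)
    rw [hBC]
    set s := Real.sqrt (5 / 3) with hsdef
    simp [Matrix.det_succ_row_zero, Fin.sum_univ_succ, Fin.succAbove]
    have h2 : s ^ 2 = 5 / 3 := by rw [sq]; exact hs
    field_simp
    ring_nf
    rw [h2]
    ring
  have hdet0 : B.det ≠ 0 := by
    rw [hdet]; positivity
  have hrankB : B.rank = 4 := by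
    have := Matrix.rank_of_isUnit B ((Matrix.isUnit_iff_isUnit_det B).2 hdet0.isUnit)
    simpa using this
  refine le_antisymm ?_ ?_
  · simpa using A.rank_le_card_width
  · calc (4 : ℕ) = B.rank := hrankB.symm
      _ ≤ A.rank := rank_row_submatrix_le' _ _
end

section
/- For every L > 0 and all I₁, I₂ ∈ ℝ, the real 6×4 matrix M with rows: (1/L³, −3/L⁴, 0, 0); (−3/(4L⁷), 21/(4L⁸), 0, 0); (−√7/(6L⁷), 7√7/(6L⁸), 0, 0); (3/(8L⁷), −21/(8L⁸), 0, 0); (−(1990I₁ + 911√10 I₂)/(960L⁸), (1990I₁ + 911√10 I₂)/(120L⁹), −199/(96L⁸), −911/(96√10 L⁸)); (−(911√10 I₁ + 735I₂)/(960L⁸), (911√10 I₁ + 735I₂)/(120L⁹), −911/(96√10 L⁸), −49/(64L⁸)) has rank exactly 4. -/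
/-!
Rows 1, 2, 5, 6 form a block lower triangular 4 × 4 minor. One diagonal block holds the first
two frequencies and their `L`-derivatives, with determinant `3 / L¹¹`; the other is the twist
`∂(Ω₅, Ω₆)/∂(I₁, I₂)` of the normal form, with determinant `-85457 / (11520 L¹⁶)`. So the minor
does not vanish, whatever `I₁, I₂` are.
-/

open Real Matrix

theorem Matrix.rank_eq_card_of_det_submatrix_ne_zero {R m n : Type*} [CommRing R] [IsDomain R]
    [Fintype n] [DecidableEq n] (A : Matrix m n R) (r : n → m)
    (h : (A.submatrix r id).det ≠ 0) : A.rank = Fintype.card n := by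
  refine le_antisymm A.rank_le_card_width ?_
  rw [← rank_of_det_ne_zero h]
  exact rank_submatrix_le A r id

theorem Matrix.det_fin_four_of_blockLowerTriangular {R : Type*} [CommRing R]
    (A : Matrix (Fin 4) (Fin 4) R) (h02 : A 0 2 = 0) (h03 : A 0 3 = 0) (h12 : A 1 2 = 0)
    (h13 : A 1 3 = 0) :
    A.det = (A 0 0 * A 1 1 - A 0 1 * A 1 0) * (A 2 2 * A 3 3 - A 2 3 * A 3 2) := by
  have h : (Fin.succAbove 1 2 : Fin 4) = 3 := rfl
  simp [det_succ_row_zero, Fin.sum_univ_succ, h02, h03, h12, h13, h]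
  ring

/-- The frequency matrix `M_Ω(L,I₁,I₂)` around the circular polar
equilibria `E₃,₄` has rank exactly 4 (Han–Li–Yi nondegeneracy). -/
theorem frequency_matrix_polar_rank (L I₁ I₂ : ℝ) (hL : 0 < L) :
    (!![1 / L ^ 3, -3 / L ^ 4, 0, 0;
        -3 / (4 * L ^ 7), 21 / (4 * L ^ 8), 0, 0;
        -(Real.sqrt 7) / (6 * L ^ 7), 7 * Real.sqrt 7 / (6 * L ^ 8), 0, 0;
        3 / (8 * L ^ 7), -21 / (8 * L ^ 8), 0, 0;
        -(1990 * I₁ + 911 * Real.sqrt 10 * I₂) / (960 * L ^ 8),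
          (1990 * I₁ + 911 * Real.sqrt 10 * I₂) / (120 * L ^ 9),
          -199 / (96 * L ^ 8), -911 / (96 * Real.sqrt 10 * L ^ 8);
        -(911 * Real.sqrt 10 * I₁ + 735 * I₂) / (960 * L ^ 8),
          (911 * Real.sqrt 10 * I₁ + 735 * I₂) / (120 * L ^ 9),
          -911 / (96 * Real.sqrt 10 * L ^ 8), -49 / (64 * L ^ 8)] :
      Matrix (Fin 6) (Fin 4) ℝ).rank = 4 := by
  refine (rank_eq_card_of_det_submatrix_ne_zero _ ![0, 1, 4, 5] ?_).trans (Fintype.card_fin 4)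
  rw [det_fin_four_of_blockLowerTriangular _ rfl rfl rfl rfl]
  simp only [submatrix_apply, id_eq, of_apply, cons_val]
  have hdelaunay : 1 / L ^ 3 * (21 / (4 * L ^ 8)) - -3 / L ^ 4 * (-3 / (4 * L ^ 7))
      = 3 / L ^ 11 := by
    field_simp
    ring
  have htwist : -199 / (96 * L ^ 8) * (-49 / (64 * L ^ 8))
      - -911 / (96 * √10 * L ^ 8) * (-911 / (96 * √10 * L ^ 8)) = -85457 / (11520 * L ^ 16) := by
    have hs : √10 ^ 2 = 10 := sq_sqrt (by norm_num)
    field_simp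
    linear_combination 61188415488 * hs
  rw [hdelaunay, htwist]
  positivity
end

section
/- Let G > 0 and consider the polynomial vector field on ℝ³ given by X(β1,β2,β3) = ( β3(√3 β1 − 7β2), β3(9β1 − √3 β2), −√3 β1² − 2β1β2 + √3 β2² ). Then the set of zeros of X on the sphere β1² + β2² + β3² = G² is exactly the six points (0, 0, G), (0, 0, −G), (√3 G/2, −G/2, 0), (−√3 G/2, G/2, 0), (G/2, √3 G/2, 0), (−G/2, −√3 G/2, 0). -/
open Real

/-- On the sphere of radius `G`, the zeros of the twice-reduced vector
field `X(β) = (β₃(√3β₁ − 7β₂), β₃(9β₁ − √3β₂), −√3β₁² − 2β₁β₂ + √3β₂²)` are exactly the six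
relative equilibria. -/
theorem twice_reduced_equilibria (G : ℝ) (hG : 0 < G) :
    {β : Fin 3 → ℝ |
        (β 0) ^ 2 + (β 1) ^ 2 + (β 2) ^ 2 = G ^ 2 ∧
        β 2 * (Real.sqrt 3 * β 0 - 7 * β 1) = 0 ∧
        β 2 * (9 * β 0 - Real.sqrt 3 * β 1) = 0 ∧
        -(Real.sqrt 3) * (β 0) ^ 2 - 2 * (β 0) * (β 1) + Real.sqrt 3 * (β 1) ^ 2 = 0}
      = {![0, 0, G], ![0, 0, -G],
         ![Real.sqrt 3 * G / 2, -G / 2, 0], ![-(Real.sqrt 3) * G / 2, G / 2, 0],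
         ![G / 2, Real.sqrt 3 * G / 2, 0], ![-G / 2, -(Real.sqrt 3) * G / 2, 0]} := by
  have hsq : Real.sqrt 3 ^ 2 = 3 := Real.sq_sqrt (by norm_num)
  have hspos : 0 < Real.sqrt 3 := Real.sqrt_pos.mpr (by norm_num)
  ext β
  have key : ∀ a b c : ℝ, β = ![a, b, c] ↔ β 0 = a ∧ β 1 = b ∧ β 2 = c := by
    intro a b c
    constructor
    · rintro rfl; refine ⟨rfl, rfl, rfl⟩
    · rintro ⟨h0, h1, h2⟩; funext i; fin_cases i <;> simpa
  simp only [Set.mem_setOf_eq, Set.mem_insert_iff, Set.mem_singleton_iff, key]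
  constructor
  · rintro ⟨hsphere, h1, h2, h3⟩
    by_cases hz : β 2 = 0
    · -- equatorial case
      have hf : (Real.sqrt 3 * β 0 - β 1) * (β 0 + Real.sqrt 3 * β 1) = 0 := by
        linear_combination (β 0 * β 1) * hsq - h3
      have hcirc : β 0 ^ 2 + β 1 ^ 2 = G ^ 2 := by
        rw [hz] at hsphere; linarith
      rcases mul_eq_zero.mp hf with hy | hx
      · -- β 1 = √3 β 0
        have hy' : β 1 = Real.sqrt 3 * β 0 := by linarith
        have h4 : (2 * β 0 - G) * (2 * β 0 + G) = 0 := by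
          nlinarith [hcirc, hy', hsq]
        rcases mul_eq_zero.mp h4 with h | h
        · refine Or.inr (Or.inr (Or.inr (Or.inr (Or.inl ⟨by linarith, ?_, hz⟩))))
          rw [hy']; linear_combination (Real.sqrt 3 / 2) * h
        · refine Or.inr (Or.inr (Or.inr (Or.inr (Or.inr ⟨by linarith, ?_, hz⟩))))
          rw [hy']; linear_combination (Real.sqrt 3 / 2) * h
      · -- β 0 = -√3 β 1
        have hx' : β 0 = -(Real.sqrt 3) * β 1 := by linarith
        have h4 : (2 * β 1 - G) * (2 * β 1 + G) = 0 := by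
          nlinarith [hcirc, hx', hsq]
        rcases mul_eq_zero.mp h4 with h | h
        · refine Or.inr (Or.inr (Or.inr (Or.inl ⟨?_, by linarith, hz⟩)))
          rw [hx']; linear_combination (-(Real.sqrt 3) / 2) * h
        · refine Or.inr (Or.inr (Or.inl ⟨?_, by linarith, hz⟩))
          rw [hx']; linear_combination (-(Real.sqrt 3) / 2) * h
    · -- polar case
      have e1 : Real.sqrt 3 * β 0 - 7 * β 1 = 0 :=
        (mul_eq_zero.mp h1).resolve_left hz
      have e2 : 9 * β 0 - Real.sqrt 3 * β 1 = 0 :=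
        (mul_eq_zero.mp h2).resolve_left hz
      have hy0 : β 1 = 0 := by nlinarith [e1, e2, hsq, hspos]
      have hx0 : β 0 = 0 := by nlinarith [e2, hy0]
      have hz2 : β 2 ^ 2 = G ^ 2 := by rw [hx0, hy0] at hsphere; linarith
      have h4 : (β 2 - G) * (β 2 + G) = 0 := by nlinarith
      rcases mul_eq_zero.mp h4 with h | h
      · exact Or.inl ⟨hx0, hy0, by linarith⟩
      · exact Or.inr (Or.inl ⟨hx0, hy0, by linarith⟩)
  · rintro (⟨h0, h1, h2⟩ | ⟨h0, h1, h2⟩ | ⟨h0, h1, h2⟩ | ⟨h0, h1, h2⟩ | ⟨h0, h1, h2⟩ |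
      ⟨h0, h1, h2⟩) <;> rw [h0, h1, h2]
    · exact ⟨by ring, by ring, by ring, by ring⟩
    · exact ⟨by ring, by ring, by ring, by ring⟩
    · exact ⟨by linear_combination (G ^ 2 / 4) * hsq, by ring, by ring,
        by linear_combination (-(Real.sqrt 3) * G ^ 2 / 4) * hsq⟩
    · exact ⟨by linear_combination (G ^ 2 / 4) * hsq, by ring, by ring,
        by linear_combination (-(Real.sqrt 3) * G ^ 2 / 4) * hsq⟩
    · exact ⟨by linear_combination (G ^ 2 / 4) * hsq, by ring, by ring,
        by linear_combination (Real.sqrt 3 * G ^ 2 / 4) * hsq⟩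
    · exact ⟨by linear_combination (G ^ 2 / 4) * hsq, by ring, by ring,
        by linear_combination (Real.sqrt 3 * G ^ 2 / 4) * hsq⟩
end

section
/- For every L > 0, G > 0 and every I ∈ ℝ, the real 4×4 matrix M with rows: (1/L³, −3/L⁴, 0, 0); (−1/(G⁴L³), 3/(G⁴L⁴), 4/(G⁵L³), 0); (−√(5/3)/(2G⁴L³), √15/(2G⁴L⁴), 2√(5/3)/(G⁵L³), 0); (2I/(3G⁵L³), −2I/(G⁵L⁴), −10I/(3G⁶L³), 2/(3G⁵L³)) has rank exactly 3. -/
/-!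
Since √15 = 3√(5/3), row 2 is √(5/3)/2 times row 1, so the rank is at most 3. The minor on
rows 0, 1, 3 and columns 0, 2, 3 is lower triangular with diagonal 1/L³, 4/(G⁵L³), 2/(3G⁵L³),
all nonzero, so the rank is at least 3.
-/

open Real Matrix

namespace Matrix

variable {m n R : Type*} [Field R]

theorem not_linearIndependent_row_of_row_eq_smul {M : Matrix m n R} {i j : m} (hij : i ≠ j)
    {c : R} (h : M i = c • M j) : ¬LinearIndependent R M.row := fun hM => by
  have hpair := (LinearIndepOn.pair_iff M.row hij).mp (hM.linearIndepOn {i, j}) 1 (-c)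
  simp [Matrix.row, h] at hpair

variable [Fintype n]

theorem rank_lt_card_height_of_row_eq_smul [Fintype m] {M : Matrix m n R} {i j : m} (hij : i ≠ j)
    {c : R} (h : M i = c • M j) : M.rank < Fintype.card m := by
  refine M.rank_le_card_height.lt_of_ne fun hcard =>
    not_linearIndependent_row_of_row_eq_smul hij h ?_
  rw [linearIndependent_iff_card_eq_finrank_span, Set.finrank, ← rank_eq_finrank_span_row, hcard]

theorem card_le_rank_of_submatrix_isLowerTriangular {k : Type*} [Fintype k] [LinearOrder k]
    (M : Matrix m n R) (r : k → m) (c : k → n) (hM : (M.submatrix r c).IsLowerTriangular)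
    (hdiag : ∀ i, M (r i) (c i) ≠ 0) : Fintype.card k ≤ M.rank := by
  classical
  have hdet : (M.submatrix r c).det ≠ 0 := by
    simpa [det_of_isLowerTriangular _ hM, Finset.prod_ne_zero_iff] using hdiag
  exact (rank_of_det_ne_zero hdet).symm.le.trans (M.rank_submatrix_le r c)

end Matrix

theorem sqrt_fifteen_eq : √15 = 3 * √(5 / 3) := by
  rw [show (15 : ℝ) = 3 ^ 2 * (5 / 3) by norm_num, sqrt_mul (by positivity), sqrt_sq (by norm_num)]

/-- The frequency matrix `M_Ω(L,G,I)` around the relative equilibria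
`E₁,₂ = (0,0,±G)` of the twice-reduced system has rank exactly 3 (Han–Li–Yi
nondegeneracy). -/
theorem frequency_matrix_twice_reduced_E12_rank (L G I : ℝ) (hL : 0 < L) (hG : 0 < G) :
    (!![1 / L ^ 3, -3 / L ^ 4, 0, 0;
        -1 / (G ^ 4 * L ^ 3), 3 / (G ^ 4 * L ^ 4), 4 / (G ^ 5 * L ^ 3), 0;
        -(Real.sqrt (5 / 3)) / (2 * G ^ 4 * L ^ 3), Real.sqrt 15 / (2 * G ^ 4 * L ^ 4),
          2 * Real.sqrt (5 / 3) / (G ^ 5 * L ^ 3), 0;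
        2 * I / (3 * G ^ 5 * L ^ 3), -2 * I / (G ^ 5 * L ^ 4),
          -10 * I / (3 * G ^ 6 * L ^ 3), 2 / (3 * G ^ 5 * L ^ 3)] :
      Matrix (Fin 4) (Fin 4) ℝ).rank = 3 := by
  apply Nat.le_antisymm
  · refine Nat.le_of_lt_succ ((rank_lt_card_height_of_row_eq_smul (i := 2) (j := 1)
      (c := √(5 / 3) / 2) (by decide) ?_).trans_eq (Fintype.card_fin 4))
    funext j
    fin_cases j <;> simp [sqrt_fifteen_eq] <;> field_simp; norm_num
  · refine (Fintype.card_fin 3).symm.trans_le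
      (card_le_rank_of_submatrix_isLowerTriangular _ ![0, 1, 3] ![0, 2, 3] ?_ ?_)
    · intro i j hij
      rw [OrderDual.toDual_lt_toDual] at hij
      fin_cases i <;> fin_cases j <;> simp_all
    · intro i
      fin_cases i <;> simp [hL.ne', hG.ne']
end

section
/- For every L > 0, G > 0 and every I ∈ ℝ, the real 4×4 matrix M with rows: (1/L³, −3/L⁴, 0, 0); (1/(4G⁴L³), −3/(4G⁴L⁴), −1/(G⁵L³), 0); (√(5/2)/(3G⁴L³), −√(5/2)/(G⁴L⁴), −2√10/(3G⁵L³), 0); (199I/(96G⁵L³), −199I/(32G⁵L⁴), −995I/(96G⁶L³), 199/(96G⁵L³)) has rank exactly 3. -/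
/-!
The third row of the matrix is `4√(5/2)/3` times the second (because `√10 = 2√(5/2)`), so the
determinant vanishes and the rank is at most 3. The minor on rows 1, 2, 4 and columns 1, 3, 4 is
lower triangular with nonzero diagonal `1/L³, -1/(G⁵L³), 199/(96G⁵L³)`, so the rank is at least 3.
-/

open Real Matrix

namespace Matrix

variable {n : Type*} [Fintype n] [DecidableEq n]

theorem det_eq_zero_of_row_eq_smul {R : Type*} [CommRing R] {A : Matrix n n R} {i j : n}
    (hij : i ≠ j) (c : R) (h : A i = c • A j) : A.det = 0 := by
  have hA : A = A.updateRow i (c • A j) := by rw [← h, updateRow_eq_self]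
  rw [hA, det_updateRow_smul, det_updateRow_eq_zero hij.symm, mul_zero]

theorem rank_lt_card_of_det_eq_zero {K : Type*} [Field K] {A : Matrix n n K} (h : A.det = 0) :
    A.rank < Fintype.card n := by
  obtain ⟨v, hv, hAv⟩ := exists_mulVec_eq_zero_iff.mpr h
  have hker : 0 < Module.finrank K (LinearMap.ker A.mulVecLin) :=
    Module.finrank_pos_iff_exists_ne_zero.mpr ⟨⟨v, hAv⟩, fun h0 => hv (congrArg Subtype.val h0)⟩
  have hnullity := A.mulVecLin.finrank_range_add_finrank_ker
  rw [Module.finrank_fintype_fun_eq_card] at hnullity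
  rw [rank]
  omega

end Matrix

noncomputable def frequencyMatrix (L G I : ℝ) : Matrix (Fin 4) (Fin 4) ℝ :=
  !![1 / L ^ 3, -3 / L ^ 4, 0, 0;
    1 / (4 * G ^ 4 * L ^ 3), -3 / (4 * G ^ 4 * L ^ 4), -1 / (G ^ 5 * L ^ 3), 0;
    √(5 / 2) / (3 * G ^ 4 * L ^ 3), -√(5 / 2) / (G ^ 4 * L ^ 4), -2 * √10 / (3 * G ^ 5 * L ^ 3), 0;
    199 * I / (96 * G ^ 5 * L ^ 3), -199 * I / (32 * G ^ 5 * L ^ 4),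
      -995 * I / (96 * G ^ 6 * L ^ 3), 199 / (96 * G ^ 5 * L ^ 3)]

theorem sqrt_ten_eq_two_mul_sqrt_five_div_two : √10 = 2 * √(5 / 2) := by
  rw [show (10 : ℝ) = 2 ^ 2 * (5 / 2) by norm_num, sqrt_mul (by positivity), sqrt_sq zero_le_two]

theorem frequencyMatrix_row_two (L G I : ℝ) :
    frequencyMatrix L G I 2 = (4 * √(5 / 2) / 3) • frequencyMatrix L G I 1 := by
  ext j
  fin_cases j <;>
    simp only [frequencyMatrix, sqrt_ten_eq_two_mul_sqrt_five_div_two, Pi.smul_apply, smul_eq_mul,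
      Fin.zero_eta, Fin.mk_one, Fin.reduceFinMk, of_apply, cons_val', cons_val_zero, cons_val_one,
      cons_val, cons_val_fin_one] <;> ring

theorem det_frequencyMatrix_submatrix (L G I : ℝ) :
    ((frequencyMatrix L G I).submatrix ![0, 1, 3] ![0, 2, 3]).det =
      -199 / (96 * G ^ 10 * L ^ 9) := by
  rw [det_fin_three]
  simp only [frequencyMatrix, submatrix_apply, of_apply, cons_val', cons_val_zero, cons_val_one,
    cons_val, cons_val_fin_one]
  ring

/-- The frequency matrix `M_Ω(L,G,I)` around the relative equilibria
`E₃,₄ = (±√3G/2, ∓G/2, 0)` of the twice-reduced system has rank exactly 3 (Han–Li–Yi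
nondegeneracy). -/
theorem frequency_matrix_twice_reduced_E34_rank (L G I : ℝ) (hL : 0 < L) (hG : 0 < G) :
    (!![1 / L ^ 3, -3 / L ^ 4, 0, 0;
        1 / (4 * G ^ 4 * L ^ 3), -3 / (4 * G ^ 4 * L ^ 4), -1 / (G ^ 5 * L ^ 3), 0;
        Real.sqrt (5 / 2) / (3 * G ^ 4 * L ^ 3), -(Real.sqrt (5 / 2)) / (G ^ 4 * L ^ 4),
          -2 * Real.sqrt 10 / (3 * G ^ 5 * L ^ 3), 0;
        199 * I / (96 * G ^ 5 * L ^ 3), -199 * I / (32 * G ^ 5 * L ^ 4),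
          -995 * I / (96 * G ^ 6 * L ^ 3), 199 / (96 * G ^ 5 * L ^ 3)] :
      Matrix (Fin 4) (Fin 4) ℝ).rank = 3 := by
  change (frequencyMatrix L G I).rank = 3
  refine le_antisymm (Nat.le_of_lt_succ ?_) ?_
  · have hdet : (frequencyMatrix L G I).det = 0 :=
      det_eq_zero_of_row_eq_smul (by decide) _ (frequencyMatrix_row_two L G I)
    simpa using rank_lt_card_of_det_eq_zero hdet
  · have hminor : ((frequencyMatrix L G I).submatrix ![0, 1, 3] ![0, 2, 3]).det ≠ 0 := by
      rw [det_frequencyMatrix_submatrix]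
      positivity
    calc 3 = ((frequencyMatrix L G I).submatrix ![0, 1, 3] ![0, 2, 3]).rank := by
          rw [rank_of_det_ne_zero hminor, Fintype.card_fin]
      _ ≤ (frequencyMatrix L G I).rank := rank_submatrix_le _ _ _
end
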